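/- Let k be a field and let g, h ∈ k[x] be coprime polynomials with g(0) ≠ 0 and h(0) ≠ 0 such that each of g and h satisfies the inversion criterion: writing g (resp. h) with distinct roots r_i of multiplicities m_i, leading coefficient g_a (resp. h_b) and constant term g_0 (resp. h_0), one has ∏_{i<j} (r_i r_j)^{2 m_i m_j} = (g_0/g_a)^{2·deg(g)−2} (resp. the analogous equation for h). Then f = gh also satisfies the inversion criterion, and consequently tol(f) = tol(f*). -/

import Mathlib

open Polynomial
open scoped Classical

/-- The tolerant of a polynomial `f` over a field `K` (intended: `K` an algebraic closure and
`f` the image of a polynomial over a subfield): writing `f = a_n ∏ (X - r_i)^{m_i}` with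
`r_1, …, r_s` distinct, `tol f = a_n^{2n-2} ∏_{i<j} (r_i - r_j)^{2 m_i m_j}`.  The product is
taken over unordered pairs of distinct roots; this is well defined since the exponents are even. -/
noncomputable def tol {K : Type*} [Field K] (f : K[X]) : K :=
  f.leadingCoeff ^ (2 * (f.natDegree : ℤ) - 2) *
    ∏ p ∈ f.roots.toFinset.sym2.filter (fun p => ¬ p.IsDiag),
      Sym2.lift ⟨fun a b => ((a - b) ^ 2) ^ (f.rootMultiplicity a * f.rootMultiplicity b),
        fun a b => by
          dsimp only
          rw [mul_comm (rootMultiplicity a f), show (a - b) ^ 2 = (b - a) ^ 2 by ring]⟩ p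

/-- The product `∏_{i<j} (r_i r_j)^{2 m_i m_j}` over the distinct roots `r_i` of `f` with
multiplicities `m_i` (product over unordered pairs of distinct roots; well defined since the
factors are symmetric). -/
noncomputable def rootPairProd {K : Type*} [Field K] (f : K[X]) : K :=
  ∏ p ∈ f.roots.toFinset.sym2.filter (fun p => ¬ p.IsDiag),
    Sym2.lift ⟨fun a b => (a * b) ^ (2 * f.rootMultiplicity a * f.rootMultiplicity b),
      fun a b => by
        dsimp only
        rw [mul_comm a b, mul_assoc, mul_assoc, mul_comm (rootMultiplicity a f)]⟩ p

/-- `f` satisfies the inversion criterion if `∏_{i<j} (r_i r_j)^{2 m_i m_j} = (a_0/a_n)^{2n-2}`,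
where the `r_i` are the distinct roots of `f` in the algebraic closure with multiplicities `m_i`,
`a_n` is the leading coefficient and `a_0` the constant term. This is equivalent to
`tol f = tol f*`. -/
def InversionCriterion {k : Type*} [Field k] (f : k[X]) : Prop :=
  rootPairProd (f.map (algebraMap k (AlgebraicClosure k))) =
    (algebraMap k (AlgebraicClosure k) (f.coeff 0) /
        algebraMap k (AlgebraicClosure k) f.leadingCoeff) ^ (2 * (f.natDegree : ℤ) - 2)

/-!
Over `k̄`, the unordered pairs of distinct roots of `gh` are the pairs of roots of `g`, the pairs
of roots of `h`, and the mixed pairs; since `g` and `h` have no common root, multiplicities do not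
interact, and the mixed pairs contribute `(∏ rᵢ)^(2 deg h) (∏ sⱼ)^(2 deg g)`, where
`(∏ rᵢ)² = (g₀/g_a)²` by Vieta. Multiplying the two criteria gives the criterion for `gh`.

The roots of `f*` are the `rᵢ⁻¹` with the same multiplicities, its leading coefficient is `a₀`, and
`(r⁻¹ - s⁻¹)² (rs)² = (r - s)²`; hence `tol f* · ∏ (rᵢ rⱼ)^(2 mᵢ mⱼ) = (a₀/a_n)^(2n-2) tol f`, and
the criterion says exactly that the two correction factors agree.
-/

namespace Finset

variable {α β M : Type*} [CommMonoid M]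

noncomputable def pairProd (s : Finset α) (F : α → α → M) (hF : ∀ a b, F a b = F b a) : M :=
  ∏ p ∈ s.sym2.filter (fun p => ¬ p.IsDiag), Sym2.lift ⟨F, hF⟩ p

variable {F G : α → α → M} {hF : ∀ a b, F a b = F b a} {hG : ∀ a b, G a b = G b a}

theorem pairProd_congr {s : Finset α} (h : ∀ a ∈ s, ∀ b ∈ s, a ≠ b → F a b = G a b) :
    pairProd s F hF = pairProd s G hG := by
  refine prod_congr rfl fun p hp => ?_
  induction p with
  | _ a b =>
    simp only [mem_filter, mk_mem_sym2_iff, Sym2.mk_isDiag_iff] at hp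
    exact h a hp.1.1 b hp.1.2 hp.2

theorem pairProd_mul (s : Finset α) :
    pairProd s (fun a b => F a b * G a b) (fun a b => by rw [hF, hG]) =
      pairProd s F hF * pairProd s G hG := by
  rw [pairProd, pairProd, pairProd, ← prod_mul_distrib]
  refine prod_congr rfl fun p _ => ?_
  induction p with
  | _ a b => rfl

theorem sym2_filter_not_isDiag_union {s t : Finset α} (hst : Disjoint s t) :
    (s ∪ t).sym2.filter (fun p => ¬ p.IsDiag) =
      (s.sym2.filter (fun p => ¬ p.IsDiag) ∪ t.sym2.filter (fun p => ¬ p.IsDiag)) ∪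
        (s ×ˢ t).image Sym2.mk.uncurry := by
  ext p
  induction p with
  | _ a b =>
    have ha : a ∈ s → a ∉ t := fun h => disjoint_left.mp hst h
    have hb : b ∈ s → b ∉ t := fun h => disjoint_left.mp hst h
    simp only [mem_filter, mk_mem_sym2_iff, mem_union, mem_image, mem_product, Sym2.mk_isDiag_iff,
      Prod.exists]
    grind

theorem pairProd_union {s t : Finset α} (hst : Disjoint s t) :
    pairProd (s ∪ t) F hF = pairProd s F hF * pairProd t F hF * ∏ a ∈ s, ∏ b ∈ t, F a b := by
  rw [pairProd, sym2_filter_not_isDiag_union hst, prod_union, prod_union, prod_image,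
    prod_product]
  · rfl
  · rintro ⟨a, b⟩ hab ⟨c, d⟩ hcd hac
    simp only [coe_product, Set.mem_prod, mem_coe] at hab hcd
    rcases Sym2.eq_iff.mp hac with ⟨rfl, rfl⟩ | ⟨rfl, rfl⟩
    · rfl
    · exact (disjoint_left.mp hst hab.1 hcd.2).elim
  · rw [disjoint_left]
    intro p hp hp'
    induction p with
    | _ a b =>
      simp only [mem_filter, mk_mem_sym2_iff] at hp hp'
      exact disjoint_left.mp hst hp.1.1 hp'.1.1
  · rw [disjoint_left]
    intro p hp hp'
    induction p with
    | _ a b =>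
      simp only [mem_filter, mk_mem_sym2_iff, mem_union, mem_image, mem_product,
        Prod.exists] at hp hp'
      grind [disjoint_left]

theorem pairProd_image {f : β → α} (hf : Function.Injective f) (s : Finset β) :
    pairProd (s.image f) F hF = pairProd s (fun a b => F (f a) (f b)) (fun _ _ => hF _ _) := by
  rw [pairProd, sym2_image, filter_image, prod_image (Sym2.map.injective hf).injOn]
  refine prod_congr (filter_congr fun p _ => by rw [Sym2.isDiag_map hf])
    fun p _ => ?_
  induction p with
  | _ a b => rfl

end Finset

open Finset in
theorem Multiset.prod_toFinset_prod_toFinset_mul_pow_count {M : Type*} [CommMonoid M]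
    [DecidableEq M] (s t : Multiset M) :
    ∏ a ∈ s.toFinset, ∏ b ∈ t.toFinset, (a * b) ^ (s.count a * t.count b) =
      s.prod ^ Multiset.card t * t.prod ^ Multiset.card s := by
  simp only [mul_pow, prod_mul_distrib]
  congr 1
  · simp only [pow_mul, prod_pow_eq_pow_sum, Multiset.toFinset_sum_count_eq, prod_pow,
      ← Finset.prod_multiset_count]
  · rw [prod_comm]
    simp only [pow_mul', prod_pow_eq_pow_sum, Multiset.toFinset_sum_count_eq, prod_pow,
      ← Finset.prod_multiset_count]

namespace Polynomial

theorem map_reverse {R S : Type*} [Semiring R] [Semiring S] {f : R →+* S}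
    (hf : Function.Injective f) (p : R[X]) : p.reverse.map f = (p.map f).reverse := by
  rw [reverse, reverse, reflect_map, natDegree_map_eq_of_injective hf]

variable {K : Type*} [Field K] {P : K[X]}

theorem reverse_X_sub_C {r : K} (hr : r ≠ 0) : (X - C r).reverse = C (-r) * (X - C r⁻¹) := by
  rw [sub_eq_add_neg, ← C_neg, reverse_add_C]
  have hX : (X : K[X]).reverse = 1 := by
    rw [← mul_one X, reverse_X_mul]
    simpa using reverse_C (1 : K)
  simp only [hX, natDegree_X, pow_one, C_neg, neg_mul]
  rw [mul_sub, ← C_mul, mul_inv_cancel₀ hr, C_1]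
  ring

theorem zero_notMem_roots (h0 : P.coeff 0 ≠ 0) : (0 : K) ∉ P.roots := fun h =>
  h0 <| by rw [coeff_zero_eq_eval_zero]; exact (mem_roots'.mp h).2

theorem reverse_prod_X_sub_C {s : Multiset K} (hs : (0 : K) ∉ s) :
    (s.map (X - C ·)).prod.reverse =
      C (s.map (-·)).prod * ((s.map (·⁻¹)).map (X - C ·)).prod := by
  induction s using Multiset.induction with
  | empty => simpa using reverse_C (1 : K)
  | cons r s ih =>
    rw [Multiset.mem_cons, not_or] at hs
    simp only [Multiset.map_cons, Multiset.prod_cons]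
    rw [reverse_mul_of_domain, ih hs.2, reverse_X_sub_C (Ne.symm hs.1), map_mul]
    ring

theorem Splits.roots_reverse (hP : P.Splits) (h0 : P.coeff 0 ≠ 0) :
    P.reverse.roots = P.roots.map (·⁻¹) := by
  have hP0 : P ≠ 0 := fun h => h0 (by simp [h])
  have hneg0 : (P.roots.map (-·)).prod ≠ 0 :=
    Multiset.prod_ne_zero fun h => zero_notMem_roots h0 (by simpa using h)
  conv_lhs => rw [hP.eq_prod_roots]
  rw [reverse_mul_of_domain, reverse_C, reverse_prod_X_sub_C (zero_notMem_roots h0),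
    ← mul_assoc, ← C_mul, roots_C_mul _ (mul_ne_zero (leadingCoeff_ne_zero.mpr hP0) hneg0),
    roots_multiset_prod_X_sub_C]

theorem Splits.rootMultiplicity_reverse_inv (hP : P.Splits) (h0 : P.coeff 0 ≠ 0) (a : K) :
    P.reverse.rootMultiplicity a⁻¹ = P.rootMultiplicity a := by
  rw [← count_roots, ← count_roots, hP.roots_reverse h0,
    Multiset.count_map_eq_count' _ _ inv_injective]

theorem Splits.sq_prod_roots (hP : P.Splits) (hP0 : P ≠ 0) :
    P.roots.prod ^ 2 = (P.coeff 0 / P.leadingCoeff) ^ 2 := by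
  rw [hP.coeff_zero_eq_leadingCoeff_mul_prod_roots, mul_right_comm,
    mul_div_cancel_right₀ _ (leadingCoeff_ne_zero.mpr hP0), mul_pow, ← pow_mul, pow_mul',
    neg_one_sq, one_pow, one_mul]

theorem rootPairProd_eq_pairProd (P : K[X]) :
    rootPairProd P = P.roots.toFinset.pairProd
      (fun a b => (a * b) ^ (2 * P.rootMultiplicity a * P.rootMultiplicity b))
      (fun a b => by rw [mul_comm a b, mul_right_comm 2]) :=
  rfl

theorem tol_eq_pairProd (P : K[X]) :
    tol P = P.leadingCoeff ^ (2 * (P.natDegree : ℤ) - 2) * P.roots.toFinset.pairProd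
      (fun a b => ((a - b) ^ 2) ^ (P.rootMultiplicity a * P.rootMultiplicity b))
      (fun a b => by rw [mul_comm (P.rootMultiplicity a), sub_sq_comm]) :=
  rfl

theorem rootPairProd_mul {G H : K[X]} (hG : G ≠ 0) (hH : H ≠ 0) (hGH : IsCoprime G H) :
    rootPairProd (G * H) = rootPairProd G * rootPairProd H *
      ((G.roots.prod ^ 2) ^ Multiset.card H.roots *
        (H.roots.prod ^ 2) ^ Multiset.card G.roots) := by
  have hGH0 : G * H ≠ 0 := mul_ne_zero hG hH
  have hdisj : Disjoint G.roots H.roots := Multiset.disjoint_left.mpr fun {a} ha hb =>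
    (aeval_ne_zero_of_isCoprime hGH a).elim (· ((mem_roots hG).mp ha)) (· ((mem_roots hH).mp hb))
  have hmultG : ∀ a ∈ G.roots.toFinset, (G * H).rootMultiplicity a = G.roots.count a := by
    intro a ha
    rw [Multiset.mem_toFinset] at ha
    rw [← count_roots, roots_mul hGH0, Multiset.count_add,
      Multiset.count_eq_zero.mpr (Multiset.disjoint_left.mp hdisj ha), add_zero]
  have hmultH : ∀ b ∈ H.roots.toFinset, (G * H).rootMultiplicity b = H.roots.count b := by
    intro b hb
    rw [Multiset.mem_toFinset] at hb
    rw [← count_roots, roots_mul hGH0, Multiset.count_add,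
      Multiset.count_eq_zero.mpr (Multiset.disjoint_right.mp hdisj hb), zero_add]
  have hcross : ∏ a ∈ G.roots.toFinset, ∏ b ∈ H.roots.toFinset,
      (a * b) ^ (2 * (G * H).rootMultiplicity a * (G * H).rootMultiplicity b) =
      (G.roots.prod ^ 2) ^ Multiset.card H.roots * (H.roots.prod ^ 2) ^ Multiset.card G.roots := by
    rw [← pow_mul, ← pow_mul, mul_comm 2, mul_comm 2, pow_mul, pow_mul, ← mul_pow,
      ← Multiset.prod_toFinset_prod_toFinset_mul_pow_count, ← Finset.prod_pow]
    refine Finset.prod_congr rfl fun a ha => ?_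
    rw [← Finset.prod_pow]
    refine Finset.prod_congr rfl fun b hb => ?_
    rw [hmultG a ha, hmultH b hb, ← pow_mul, mul_assoc, mul_comm 2]
  rw [rootPairProd_eq_pairProd, roots_mul hGH0, Multiset.toFinset_add,
    Finset.pairProd_union (Multiset.disjoint_toFinset.mpr hdisj), hcross]
  congr 2 <;> refine Finset.pairProd_congr fun a ha b hb _ => ?_
  · rw [hmultG a ha, hmultG b hb, count_roots, count_roots]
  · rw [hmultH a ha, hmultH b hb, count_roots, count_roots]

theorem Splits.tol_reverse_mul_rootPairProd (hP : P.Splits) (h0 : P.coeff 0 ≠ 0) :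
    tol P.reverse * rootPairProd P =
      (P.coeff 0 / P.leadingCoeff) ^ (2 * (P.natDegree : ℤ) - 2) * tol P := by
  have hP0 : P ≠ 0 := fun h => h0 (by simp [h])
  have htrail : P.natTrailingDegree = 0 := natTrailingDegree_eq_zero.mpr (Or.inr h0)
  have hroots0 : ∀ a ∈ P.roots.toFinset, a ≠ 0 := fun a ha h =>
    zero_notMem_roots h0 (h ▸ Multiset.mem_toFinset.mp ha)
  rw [tol_eq_pairProd, tol_eq_pairProd, rootPairProd_eq_pairProd, reverse_natDegree,
    reverse_leadingCoeff, trailingCoeff, htrail, Nat.sub_zero, hP.roots_reverse h0,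
    Multiset.toFinset_map, Finset.pairProd_image inv_injective, mul_assoc,
    ← Finset.pairProd_mul, div_zpow, div_mul_eq_mul_div, mul_div_assoc,
    mul_div_cancel_left₀ _ (zpow_ne_zero _ (leadingCoeff_ne_zero.mpr hP0))]
  congr 1
  refine Finset.pairProd_congr fun a ha b hb _ => ?_
  rw [hP.rootMultiplicity_reverse_inv h0, hP.rootMultiplicity_reverse_inv h0, mul_assoc 2,
    pow_mul (a * b), ← mul_pow]
  congr 1
  field_simp [hroots0 a ha, hroots0 b hb]
  ring

def InversionIdentity (P : K[X]) : Prop :=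
  rootPairProd P = (P.coeff 0 / P.leadingCoeff) ^ (2 * (P.natDegree : ℤ) - 2)

theorem InversionIdentity.mul {G H : K[X]} (hG : G.Splits) (hH : H.Splits) (hG0 : G.coeff 0 ≠ 0)
    (hH0 : H.coeff 0 ≠ 0) (hGH : IsCoprime G H) (hGc : G.InversionIdentity)
    (hHc : H.InversionIdentity) : (G * H).InversionIdentity := by
  have hG0' : G ≠ 0 := fun h => hG0 (by simp [h])
  have hH0' : H ≠ 0 := fun h => hH0 (by simp [h])
  have hx : G.coeff 0 / G.leadingCoeff ≠ 0 := div_ne_zero hG0 (leadingCoeff_ne_zero.mpr hG0')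
  have hy : H.coeff 0 / H.leadingCoeff ≠ 0 := div_ne_zero hH0 (leadingCoeff_ne_zero.mpr hH0')
  rw [InversionIdentity, rootPairProd_mul hG0' hH0' hGH, hGc, hHc, hG.sq_prod_roots hG0',
    hH.sq_prod_roots hH0', ← hG.natDegree_eq_card_roots, ← hH.natDegree_eq_card_roots,
    mul_coeff_zero, leadingCoeff_mul, natDegree_mul hG0' hH0', ← div_mul_div_comm]
  generalize G.coeff 0 / G.leadingCoeff = x at hx ⊢
  generalize H.coeff 0 / H.leadingCoeff = y at hy ⊢
  have hexpG : 2 * ((G.natDegree + H.natDegree : ℕ) : ℤ) - 2 =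
      (2 * G.natDegree - 2) + (2 * H.natDegree : ℕ) := by push_cast; ring
  have hexpH : 2 * ((G.natDegree + H.natDegree : ℕ) : ℤ) - 2 =
      (2 * H.natDegree - 2) + (2 * G.natDegree : ℕ) := by push_cast; ring
  rw [mul_zpow, hexpG, zpow_add₀ hx, ← hexpG, hexpH, zpow_add₀ hy, zpow_natCast, zpow_natCast,
    pow_mul, pow_mul]
  ring

theorem Splits.tol_reverse (hP : P.Splits) (h0 : P.coeff 0 ≠ 0) (hc : P.InversionIdentity) :
    tol P.reverse = tol P := by
  have hP0 : P ≠ 0 := fun h => h0 (by simp [h])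
  have hc0 : rootPairProd P ≠ 0 :=
    hc ▸ zpow_ne_zero _ (div_ne_zero h0 (leadingCoeff_ne_zero.mpr hP0))
  refine mul_right_cancel₀ hc0 ?_
  rw [hP.tol_reverse_mul_rootPairProd h0, ← hc, mul_comm]

end Polynomial

theorem inversionCriterion_iff {k : Type*} [Field k] (f : k[X]) :
    InversionCriterion f ↔ (f.map (algebraMap k (AlgebraicClosure k))).InversionIdentity := by
  rw [InversionCriterion, InversionIdentity, coeff_map, leadingCoeff_map, natDegree_map]

/-- If `g, h ∈ k[x]` are coprime, `g(0) ≠ 0`, `h(0) ≠ 0`, and both satisfy the inversion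
criterion, then `f = g h` satisfies the inversion criterion, and consequently
`tol f = tol f*`. -/
theorem inversionCriterion_mul {k : Type*} [Field k] (g h : k[X])
    (hg0 : g.eval 0 ≠ 0) (hh0 : h.eval 0 ≠ 0) (hcop : IsCoprime g h)
    (hg : InversionCriterion g) (hh : InversionCriterion h) :
    InversionCriterion (g * h) ∧
      tol ((g * h).map (algebraMap k (AlgebraicClosure k))) =
        tol ((g * h).reverse.map (algebraMap k (AlgebraicClosure k))) := by
  set φ := algebraMap k (AlgebraicClosure k)
  have hcoeff0 {f : k[X]} (hf : f.eval 0 ≠ 0) : (f.map φ).coeff 0 ≠ 0 := by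
    rwa [coeff_map, coeff_zero_eq_eval_zero, _root_.map_ne_zero]
  have hgh : InversionCriterion (g * h) := by
    rw [inversionCriterion_iff] at hg hh ⊢
    rw [Polynomial.map_mul]
    exact hg.mul (IsAlgClosed.splits _) (IsAlgClosed.splits _) (hcoeff0 hg0) (hcoeff0 hh0)
      (by simpa using hcop.map (mapRingHom φ)) hh
  refine ⟨hgh, ?_⟩
  have hgh0 : (g * h).eval 0 ≠ 0 := by rw [eval_mul]; exact mul_ne_zero hg0 hh0
  rw [map_reverse φ.injective, (IsAlgClosed.splits _).tol_reverse (hcoeff0 hgh0)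
    ((inversionCriterion_iff _).mp hgh)]
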